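/- Let T be a positive integer, Φ₁₂, Φ₁₃, Φ₂₃ real orthogonal T×T matrices, and α₁₁, α₂₂, α₃₃, α₁₂, α₁₃, α₂₃ real numbers with α₁₁ ≠ 0. Let R be the symmetric 3T×3T block matrix with diagonal blocks α_iiI_T and off-diagonal blocks α_ijΦ_ij, and set c = α₁₁α₂₂α₃₃ − α₁₁α₂₃² − α₂₂α₁₃² − α₃₃α₁₂². If c ≥ 2|α₁₂α₁₃α₂₃|, then (c − 2|α₁₂α₁₃α₂₃|)^T ≤ det R ≤ (c + 2|α₁₂α₁₃α₂₃|)^T. Moreover (with no condition on c): if Φ₁₃ᵗΦ₁₂Φ₂₃ = I_T then det R = (c + 2α₁₂α₁₃α₂₃)^T, and if Φ₁₃ᵗΦ₁₂Φ₂₃ = −I_T then det R = (c − 2α₁₂α₁₃α₂₃)^T. -/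

import Mathlib

open Matrix

lemma fromBlocks_sub' {l m n o α : Type*} [Sub α] (A : Matrix n l α) (B : Matrix n m α)
    (C : Matrix o l α) (D : Matrix o m α) (A' : Matrix n l α) (B' : Matrix n m α)
    (C' : Matrix o l α) (D' : Matrix o m α) :
    fromBlocks A B C D - fromBlocks A' B' C' D' =
      fromBlocks (A - A') (B - B') (C - C') (D - D') := by
  ext i j; rcases i with i | i <;> rcases j with j | j <;> rfl

lemma smul_one_mul_smul_one {T : ℕ} (a b : ℝ) :
    (a • (1 : Matrix (Fin T) (Fin T) ℝ)) * (b • 1) = (a * b) • 1 := by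
  rw [Matrix.smul_mul, Matrix.mul_smul, smul_smul, Matrix.mul_one]

set_option maxHeartbeats 1000000 in
theorem key (T : ℕ)
    (Φ₁₂ Φ₁₃ Φ₂₃ : Matrix (Fin T) (Fin T) ℝ)
    (h₁₂ : Φ₁₂ᵀ * Φ₁₂ = 1) (h₁₃ : Φ₁₃ᵀ * Φ₁₃ = 1) (h₂₃ : Φ₂₃ᵀ * Φ₂₃ = 1)
    (α₁₁ α₂₂ α₃₃ α₁₂ α₁₃ α₂₃ : ℝ) (hα : α₁₁ ≠ 0)
    (hd : α₁₁ * α₃₃ - α₁₃ ^ 2 ≠ 0) :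
    (fromBlocks (α₁₁ • (1 : Matrix (Fin T) (Fin T) ℝ)) (fromCols (α₁₂ • Φ₁₂) (α₁₃ • Φ₁₃))
        (fromRows (α₁₂ • Φ₁₂ᵀ) (α₁₃ • Φ₁₃ᵀ))
        (fromBlocks (α₂₂ • 1) (α₂₃ • Φ₂₃) (α₂₃ • Φ₂₃ᵀ) (α₃₃ • 1))).det
    = ((α₁₁ * α₂₂ * α₃₃ - α₁₁ * α₂₃ ^ 2 - α₂₂ * α₁₃ ^ 2 - α₃₃ * α₁₂ ^ 2) •
          (1 : Matrix (Fin T) (Fin T) ℝ) +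
        (α₁₂ * α₁₃ * α₂₃) • (Φ₁₂ᵀ * Φ₁₃ * Φ₂₃ᵀ + (Φ₁₂ᵀ * Φ₁₃ * Φ₂₃ᵀ)ᵀ)).det := by
  have h₁₂' : Φ₁₂ * Φ₁₂ᵀ = 1 := mul_eq_one_comm.mp h₁₂
  have h₁₃' : Φ₁₃ * Φ₁₃ᵀ = 1 := mul_eq_one_comm.mp h₁₃
  have h₂₃' : Φ₂₃ * Φ₂₃ᵀ = 1 := mul_eq_one_comm.mp h₂₃
  have hd0 : α₃₃ - α₁₃ ^ 2 / α₁₁ ≠ 0 := by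
    intro h
    apply hd
    field_simp at h
    rw [sub_eq_zero]
    linarith [h]
  haveI : Invertible (α₁₁ • (1 : Matrix (Fin T) (Fin T) ℝ)) :=
    ⟨α₁₁⁻¹ • 1, by rw [smul_one_mul_smul_one, inv_mul_cancel₀ hα, one_smul],
      by rw [smul_one_mul_smul_one, mul_inv_cancel₀ hα, one_smul]⟩
  haveI : Invertible ((α₃₃ - α₁₃ ^ 2 / α₁₁) • (1 : Matrix (Fin T) (Fin T) ℝ)) :=
    ⟨(α₃₃ - α₁₃ ^ 2 / α₁₁)⁻¹ • 1,
      by rw [smul_one_mul_smul_one, inv_mul_cancel₀ hd0, one_smul],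
      by rw [smul_one_mul_smul_one, mul_inv_cancel₀ hd0, one_smul]⟩
  rw [det_fromBlocks₁₁]
  have hinv : (⅟(α₁₁ • (1 : Matrix (Fin T) (Fin T) ℝ))) = α₁₁⁻¹ • 1 :=
    invOf_eq_right_inv (by rw [smul_one_mul_smul_one, mul_inv_cancel₀ hα, one_smul])
  rw [hinv]
  -- compute the Schur complement
  have hCB : fromBlocks (α₂₂ • (1 : Matrix (Fin T) (Fin T) ℝ)) (α₂₃ • Φ₂₃) (α₂₃ • Φ₂₃ᵀ) (α₃₃ • 1) -
      fromRows (α₁₂ • Φ₁₂ᵀ) (α₁₃ • Φ₁₃ᵀ) * (α₁₁⁻¹ • (1 : Matrix (Fin T) (Fin T) ℝ)) *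
      fromCols (α₁₂ • Φ₁₂) (α₁₃ • Φ₁₃) =
      fromBlocks ((α₂₂ - α₁₂ ^ 2 / α₁₁) • 1)
        (α₂₃ • Φ₂₃ - (α₁₂ * α₁₃ / α₁₁) • (Φ₁₂ᵀ * Φ₁₃))
        (α₂₃ • Φ₂₃ᵀ - (α₁₂ * α₁₃ / α₁₁) • (Φ₁₃ᵀ * Φ₁₂)) ((α₃₃ - α₁₃ ^ 2 / α₁₁) • 1) := by
    rw [Matrix.mul_smul, Matrix.mul_one, Matrix.smul_mul, fromRows_mul_fromCols]
    simp only [Matrix.smul_mul, Matrix.mul_smul, smul_smul, h₁₂, h₁₃, Matrix.fromBlocks_smul]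
    rw [fromBlocks_sub', fromBlocks_inj]
    refine ⟨by module, by module, by module, by module⟩
  rw [hCB, det_fromBlocks₂₂]
  have hinv2 : (⅟((α₃₃ - α₁₃ ^ 2 / α₁₁) • (1 : Matrix (Fin T) (Fin T) ℝ)))
      = (α₃₃ - α₁₃ ^ 2 / α₁₁)⁻¹ • 1 :=
    invOf_eq_right_inv (by rw [smul_one_mul_smul_one, mul_inv_cancel₀ hd0, one_smul])
  rw [hinv2]
  have hψ : (Φ₁₂ᵀ * Φ₁₃) * (Φ₁₃ᵀ * Φ₁₂) = 1 := by
    rw [Matrix.mul_assoc, ← Matrix.mul_assoc Φ₁₃, h₁₃', Matrix.one_mul, h₁₂]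
  have htr : (Φ₁₂ᵀ * Φ₁₃ * Φ₂₃ᵀ)ᵀ = Φ₂₃ * (Φ₁₃ᵀ * Φ₁₂) := by
    simp [Matrix.transpose_mul, Matrix.mul_assoc]
  have hmid : (α₂₃ • Φ₂₃ - (α₁₂ * α₁₃ / α₁₁) • (Φ₁₂ᵀ * Φ₁₃)) *
      ((α₃₃ - α₁₃ ^ 2 / α₁₁)⁻¹ • (1 : Matrix (Fin T) (Fin T) ℝ)) *
      (α₂₃ • Φ₂₃ᵀ - (α₁₂ * α₁₃ / α₁₁) • (Φ₁₃ᵀ * Φ₁₂)) =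
      (α₃₃ - α₁₃ ^ 2 / α₁₁)⁻¹ •
        ((α₂₃ ^ 2 + (α₁₂ * α₁₃ / α₁₁) ^ 2) • (1 : Matrix (Fin T) (Fin T) ℝ) -
          (α₁₂ * α₁₃ * α₂₃ / α₁₁) • (Φ₁₂ᵀ * Φ₁₃ * Φ₂₃ᵀ + (Φ₁₂ᵀ * Φ₁₃ * Φ₂₃ᵀ)ᵀ)) := by
    rw [Matrix.mul_smul, Matrix.mul_one, Matrix.smul_mul]
    congr 1
    rw [sub_mul, Matrix.mul_sub, Matrix.mul_sub, htr]
    simp only [Matrix.smul_mul, Matrix.mul_smul, smul_smul, h₂₃', hψ]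
    module
  rw [hmid]
  have hXd : ((α₁₁ * (α₃₃ - α₁₃ ^ 2 / α₁₁)) •
        ((α₂₂ - α₁₂ ^ 2 / α₁₁) • (1 : Matrix (Fin T) (Fin T) ℝ) -
          (α₃₃ - α₁₃ ^ 2 / α₁₁)⁻¹ •
            ((α₂₃ ^ 2 + (α₁₂ * α₁₃ / α₁₁) ^ 2) • (1 : Matrix (Fin T) (Fin T) ℝ) -
              (α₁₂ * α₁₃ * α₂₃ / α₁₁) • (Φ₁₂ᵀ * Φ₁₃ * Φ₂₃ᵀ + (Φ₁₂ᵀ * Φ₁₃ * Φ₂₃ᵀ)ᵀ))))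
      = ((α₁₁ * α₂₂ * α₃₃ - α₁₁ * α₂₃ ^ 2 - α₂₂ * α₁₃ ^ 2 - α₃₃ * α₁₂ ^ 2) •
          (1 : Matrix (Fin T) (Fin T) ℝ) +
        (α₁₂ * α₁₃ * α₂₃) • (Φ₁₂ᵀ * Φ₁₃ * Φ₂₃ᵀ + (Φ₁₂ᵀ * Φ₁₃ * Φ₂₃ᵀ)ᵀ)) := by
    have hrw : (α₃₃ - α₁₃ ^ 2 / α₁₁)⁻¹ = α₁₁ / (α₁₁ * α₃₃ - α₁₃ ^ 2) := by
      rw [show α₃₃ - α₁₃ ^ 2 / α₁₁ = (α₁₁ * α₃₃ - α₁₃ ^ 2) / α₁₁ by field_simp, inv_div]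
    match_scalars <;> rw [hrw] <;> field_simp <;> ring
  rw [← hXd, Matrix.det_smul, Matrix.det_smul, Matrix.det_smul, det_one, Fintype.card_fin,
    mul_one, mul_pow]
  ring

noncomputable def splitEquiv (T : ℕ) : Fin T ⊕ (Fin T ⊕ Fin T) ≃ Fin 3 × Fin T where
  toFun := Sum.elim (fun t => (0, t)) (Sum.elim (fun t => (1, t)) (fun t => (2, t)))
  invFun p := if p.1 = 0 then .inl p.2 else if p.1 = 1 then .inr (.inl p.2) else .inr (.inr p.2)
  left_inv x := by rcases x with t | t | t <;> simp
  right_inv p := by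
    obtain ⟨i, t⟩ := p
    fin_cases i <;> simp

def bigR (T : ℕ) (Φ₁₂ Φ₁₃ Φ₂₃ : Matrix (Fin T) (Fin T) ℝ)
    (α₁₁ α₂₂ α₃₃ α₁₂ α₁₃ α₂₃ : ℝ) : Matrix (Fin 3 × Fin T) (Fin 3 × Fin T) ℝ :=
  Matrix.of fun p q : Fin 3 × Fin T =>
      (![![α₁₁ • (1 : Matrix (Fin T) (Fin T) ℝ), α₁₂ • Φ₁₂, α₁₃ • Φ₁₃],
         ![α₁₂ • Φ₁₂ᵀ, α₂₂ • (1 : Matrix (Fin T) (Fin T) ℝ), α₂₃ • Φ₂₃],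
         ![α₁₃ • Φ₁₃ᵀ, α₂₃ • Φ₂₃ᵀ, α₃₃ • (1 : Matrix (Fin T) (Fin T) ℝ)]]
        : Fin 3 → Fin 3 → Matrix (Fin T) (Fin T) ℝ) p.1 q.1 p.2 q.2

lemma bigR_submatrix (T : ℕ) (Φ₁₂ Φ₁₃ Φ₂₃ : Matrix (Fin T) (Fin T) ℝ)
    (α₁₁ α₂₂ α₃₃ α₁₂ α₁₃ α₂₃ : ℝ) :
    (bigR T Φ₁₂ Φ₁₃ Φ₂₃ α₁₁ α₂₂ α₃₃ α₁₂ α₁₃ α₂₃).submatrix (splitEquiv T) (splitEquiv T)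
    = fromBlocks (α₁₁ • 1) (fromCols (α₁₂ • Φ₁₂) (α₁₃ • Φ₁₃))
        (fromRows (α₁₂ • Φ₁₂ᵀ) (α₁₃ • Φ₁₃ᵀ))
        (fromBlocks (α₂₂ • 1) (α₂₃ • Φ₂₃) (α₂₃ • Φ₂₃ᵀ) (α₃₃ • 1)) := by
  ext i j
  rcases i with t | t | t <;> rcases j with s | s | s <;>
    simp [bigR, splitEquiv, fromBlocks, fromCols]

theorem key2 (T : ℕ)
    (Φ₁₂ Φ₁₃ Φ₂₃ : Matrix (Fin T) (Fin T) ℝ)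
    (h₁₂ : Φ₁₂ᵀ * Φ₁₂ = 1) (h₁₃ : Φ₁₃ᵀ * Φ₁₃ = 1) (h₂₃ : Φ₂₃ᵀ * Φ₂₃ = 1)
    (α₁₁ α₂₂ α₃₃ α₁₂ α₁₃ α₂₃ : ℝ) (hα : α₁₁ ≠ 0) :
    (bigR T Φ₁₂ Φ₁₃ Φ₂₃ α₁₁ α₂₂ α₃₃ α₁₂ α₁₃ α₂₃).det
    = ((α₁₁ * α₂₂ * α₃₃ - α₁₁ * α₂₃ ^ 2 - α₂₂ * α₁₃ ^ 2 - α₃₃ * α₁₂ ^ 2) •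
          (1 : Matrix (Fin T) (Fin T) ℝ) +
        (α₁₂ * α₁₃ * α₂₃) • (Φ₁₂ᵀ * Φ₁₃ * Φ₂₃ᵀ + (Φ₁₂ᵀ * Φ₁₃ * Φ₂₃ᵀ)ᵀ)).det := by
  have main : ∀ t : ℝ, α₁₁ * t - α₁₃ ^ 2 ≠ 0 →
      (bigR T Φ₁₂ Φ₁₃ Φ₂₃ α₁₁ α₂₂ t α₁₂ α₁₃ α₂₃).det
      = ((α₁₁ * α₂₂ * t - α₁₁ * α₂₃ ^ 2 - α₂₂ * α₁₃ ^ 2 - t * α₁₂ ^ 2) •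
          (1 : Matrix (Fin T) (Fin T) ℝ) +
        (α₁₂ * α₁₃ * α₂₃) • (Φ₁₂ᵀ * Φ₁₃ * Φ₂₃ᵀ + (Φ₁₂ᵀ * Φ₁₃ * Φ₂₃ᵀ)ᵀ)).det := by
    intro t ht
    rw [← Matrix.det_submatrix_equiv_self (splitEquiv T), bigR_submatrix]
    exact key T Φ₁₂ Φ₁₃ Φ₂₃ h₁₂ h₁₃ h₂₃ α₁₁ α₂₂ t α₁₂ α₁₃ α₂₃ hα ht
  have hf : Continuous fun t : ℝ => (bigR T Φ₁₂ Φ₁₃ Φ₂₃ α₁₁ α₂₂ t α₁₂ α₁₃ α₂₃).det := by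
    apply Continuous.matrix_det
    apply continuous_matrix
    intro p q
    obtain ⟨i, x⟩ := p
    obtain ⟨j, y⟩ := q
    fin_cases i <;> fin_cases j <;> simp [bigR] <;> fun_prop
  have hg : Continuous fun t : ℝ =>
      (((α₁₁ * α₂₂ * t - α₁₁ * α₂₃ ^ 2 - α₂₂ * α₁₃ ^ 2 - t * α₁₂ ^ 2) •
          (1 : Matrix (Fin T) (Fin T) ℝ) +
        (α₁₂ * α₁₃ * α₂₃) • (Φ₁₂ᵀ * Φ₁₃ * Φ₂₃ᵀ + (Φ₁₂ᵀ * Φ₁₃ * Φ₂₃ᵀ)ᵀ)).det : ℝ) := by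
    apply Continuous.matrix_det
    apply continuous_matrix
    intro x y
    simp only [Matrix.add_apply, Matrix.smul_apply, smul_eq_mul]
    fun_prop
  have := Continuous.ext_on (dense_compl_singleton (α₁₃ ^ 2 / α₁₁)) hf hg (fun t ht => by
    apply main
    intro h
    apply ht
    simp only [Set.mem_singleton_iff]
    field_simp
    linarith [h])
  exact congrFun this α₃₃

lemma abs_dot_le_one {n : ℕ} (x y : Fin n → ℝ) (hx : x ⬝ᵥ x = 1) (hy : y ⬝ᵥ y = 1) :
    |x ⬝ᵥ y| ≤ 1 := by
  have e1 : ∑ i, (x i - y i) ^ 2 = (x ⬝ᵥ x) - 2 * (x ⬝ᵥ y) + (y ⬝ᵥ y) := by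
    simp only [dotProduct, Finset.mul_sum, ← Finset.sum_add_distrib,
      ← Finset.sum_sub_distrib]
    exact Finset.sum_congr rfl fun i _ => by ring
  have e2 : ∑ i, (x i + y i) ^ 2 = (x ⬝ᵥ x) + 2 * (x ⬝ᵥ y) + (y ⬝ᵥ y) := by
    simp only [dotProduct, Finset.mul_sum, ← Finset.sum_add_distrib,
      ← Finset.sum_sub_distrib]
    exact Finset.sum_congr rfl fun i _ => by ring
  have h1 : (0:ℝ) ≤ ∑ i, (x i - y i) ^ 2 := Finset.sum_nonneg fun i _ => sq_nonneg _
  have h2 : (0:ℝ) ≤ ∑ i, (x i + y i) ^ 2 := Finset.sum_nonneg fun i _ => sq_nonneg _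
  rw [e1, hx, hy] at h1
  rw [e2, hx, hy] at h2
  rw [abs_le]
  constructor <;> linarith

lemma det_clamp {T : ℕ} (W : Matrix (Fin T) (Fin T) ℝ) (hW : Wᵀ * W = 1) (c w : ℝ)
    (h : 2 * |w| ≤ c) :
    (c - 2 * |w|) ^ T ≤ (c • (1 : Matrix (Fin T) (Fin T) ℝ) + w • (W + Wᵀ)).det ∧
    (c • (1 : Matrix (Fin T) (Fin T) ℝ) + w • (W + Wᵀ)).det ≤ (c + 2 * |w|) ^ T := by
  set N : Matrix (Fin T) (Fin T) ℝ := c • 1 + w • (W + Wᵀ) with hNdef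
  have hN : N.IsHermitian := by
    rw [Matrix.IsHermitian, conjTranspose_eq_transpose_of_trivial, hNdef]
    rw [Matrix.transpose_add, Matrix.transpose_smul, Matrix.transpose_smul,
      Matrix.transpose_one, Matrix.transpose_add, Matrix.transpose_transpose, add_comm Wᵀ W]
  have hbound : ∀ i, c - 2 * |w| ≤ hN.eigenvalues i ∧ hN.eigenvalues i ≤ c + 2 * |w| := by
    intro i
    set μ := hN.eigenvalues i with hμ
    set v : Fin T → ℝ := ⇑(hN.eigenvectorBasis i) with hvdef
    have hv : N *ᵥ v = μ • v := hN.mulVec_eigenvectorBasis i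
    have hnorm : ‖hN.eigenvectorBasis i‖ = 1 := hN.eigenvectorBasis.orthonormal.1 i
    have hvv : v ⬝ᵥ v = 1 := by
      rw [EuclideanSpace.norm_eq] at hnorm
      have h0 : 0 ≤ ∑ j, ‖hN.eigenvectorBasis i j‖ ^ 2 :=
        Finset.sum_nonneg fun j _ => sq_nonneg _
      have := Real.sqrt_eq_one.mp hnorm
      simpa [dotProduct, hvdef, pow_two, Real.norm_eq_abs, sq_abs,
        ← pow_two] using this
    have hWv : (W *ᵥ v) ⬝ᵥ (W *ᵥ v) = 1 := by
      rw [Matrix.dotProduct_mulVec, ← Matrix.mulVec_transpose, Matrix.mulVec_mulVec, hW,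
        Matrix.one_mulVec, hvv]
    have hsym : v ⬝ᵥ (Wᵀ *ᵥ v) = v ⬝ᵥ (W *ᵥ v) := by
      rw [Matrix.dotProduct_mulVec, Matrix.vecMul_transpose, dotProduct_comm]
    have hq : |v ⬝ᵥ (W *ᵥ v)| ≤ 1 := abs_dot_le_one _ _ hvv hWv
    have hmu : μ = c + 2 * w * (v ⬝ᵥ (W *ᵥ v)) := by
      have hdd := congrArg (fun x => v ⬝ᵥ x) hv
      simp only [hNdef, Matrix.add_mulVec, Matrix.smul_mulVec, Matrix.one_mulVec,
        dotProduct_add, dotProduct_smul, smul_eq_mul, hsym, hvv] at hdd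
      linarith [hdd]
    have habs : |2 * w * (v ⬝ᵥ (W *ᵥ v))| ≤ 2 * |w| := by
      rw [abs_mul, abs_mul, abs_two]
      calc 2 * |w| * |v ⬝ᵥ (W *ᵥ v)| ≤ 2 * |w| * 1 := by
            apply mul_le_mul_of_nonneg_left hq (by positivity)
        _ = 2 * |w| := mul_one _
    obtain ⟨hl, hr⟩ := abs_le.mp habs
    constructor <;> [linarith [hmu, hl]; linarith [hmu, hr]]
  have hdet : N.det = ∏ i, hN.eigenvalues i := by
    simpa using hN.det_eq_prod_eigenvalues
  have hcard : (Finset.univ : Finset (Fin T)).card = T := by simp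
  have hpl : (c - 2 * |w|) ^ T = ∏ _i : Fin T, (c - 2 * |w|) := by
    rw [Finset.prod_const, hcard]
  have hpr : (c + 2 * |w|) ^ T = ∏ _i : Fin T, (c + 2 * |w|) := by
    rw [Finset.prod_const, hcard]
  constructor
  · rw [hdet, hpl]
    exact Finset.prod_le_prod (fun i _ => by linarith [abs_nonneg w])
      (fun i _ => (hbound i).1)
  · rw [hdet, hpr]
    exact Finset.prod_le_prod
      (fun i _ => by linarith [(hbound i).1, abs_nonneg w]) (fun i _ => (hbound i).2)


/-- Bounds on (and exact values of) the determinant of the 3×3 block matrix with scalar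
diagonal blocks and scaled-orthogonal off-diagonal blocks. -/
theorem stmt_8 (T : ℕ) (hT : 0 < T)
    (Φ₁₂ Φ₁₃ Φ₂₃ : Matrix (Fin T) (Fin T) ℝ)
    (h₁₂ : Φ₁₂ᵀ * Φ₁₂ = 1) (h₁₃ : Φ₁₃ᵀ * Φ₁₃ = 1) (h₂₃ : Φ₂₃ᵀ * Φ₂₃ = 1)
    (α₁₁ α₂₂ α₃₃ α₁₂ α₁₃ α₂₃ : ℝ) (hα : α₁₁ ≠ 0)
    (R : Matrix (Fin 3 × Fin T) (Fin 3 × Fin T) ℝ)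
    (hR : R = Matrix.of fun p q : Fin 3 × Fin T =>
      (![![α₁₁ • (1 : Matrix (Fin T) (Fin T) ℝ), α₁₂ • Φ₁₂, α₁₃ • Φ₁₃],
         ![α₁₂ • Φ₁₂ᵀ, α₂₂ • (1 : Matrix (Fin T) (Fin T) ℝ), α₂₃ • Φ₂₃],
         ![α₁₃ • Φ₁₃ᵀ, α₂₃ • Φ₂₃ᵀ, α₃₃ • (1 : Matrix (Fin T) (Fin T) ℝ)]]
        : Fin 3 → Fin 3 → Matrix (Fin T) (Fin T) ℝ) p.1 q.1 p.2 q.2)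
    (c : ℝ)
    (hc : c = α₁₁ * α₂₂ * α₃₃ - α₁₁ * α₂₃ ^ 2 - α₂₂ * α₁₃ ^ 2 - α₃₃ * α₁₂ ^ 2) :
    (2 * |α₁₂ * α₁₃ * α₂₃| ≤ c →
      (c - 2 * |α₁₂ * α₁₃ * α₂₃|) ^ T ≤ R.det ∧
        R.det ≤ (c + 2 * |α₁₂ * α₁₃ * α₂₃|) ^ T) ∧
    (Φ₁₃ᵀ * Φ₁₂ * Φ₂₃ = 1 → R.det = (c + 2 * (α₁₂ * α₁₃ * α₂₃)) ^ T) ∧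
    (Φ₁₃ᵀ * Φ₁₂ * Φ₂₃ = -1 → R.det = (c - 2 * (α₁₂ * α₁₃ * α₂₃)) ^ T) := by
  have h₁₂' : Φ₁₂ * Φ₁₂ᵀ = 1 := mul_eq_one_comm.mp h₁₂
  have h₁₃' : Φ₁₃ * Φ₁₃ᵀ = 1 := mul_eq_one_comm.mp h₁₃
  have h₂₃' : Φ₂₃ * Φ₂₃ᵀ = 1 := mul_eq_one_comm.mp h₂₃
  have hRdet : R.det =
      (c • (1 : Matrix (Fin T) (Fin T) ℝ) +
        (α₁₂ * α₁₃ * α₂₃) • (Φ₁₂ᵀ * Φ₁₃ * Φ₂₃ᵀ + (Φ₁₂ᵀ * Φ₁₃ * Φ₂₃ᵀ)ᵀ)).det := by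
    rw [hR, hc]
    exact key2 T Φ₁₂ Φ₁₃ Φ₂₃ h₁₂ h₁₃ h₂₃ α₁₁ α₂₂ α₃₃ α₁₂ α₁₃ α₂₃ hα
  refine ⟨?_, ?_, ?_⟩
  · intro hcw
    have hWo : (Φ₁₂ᵀ * Φ₁₃ * Φ₂₃ᵀ)ᵀ * (Φ₁₂ᵀ * Φ₁₃ * Φ₂₃ᵀ) = 1 := by
      calc (Φ₁₂ᵀ * Φ₁₃ * Φ₂₃ᵀ)ᵀ * (Φ₁₂ᵀ * Φ₁₃ * Φ₂₃ᵀ)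
          = Φ₂₃ * (Φ₁₃ᵀ * (Φ₁₂ * (Φ₁₂ᵀ * (Φ₁₃ * Φ₂₃ᵀ)))) := by
            simp only [Matrix.transpose_mul, Matrix.transpose_transpose, Matrix.mul_assoc]
        _ = Φ₂₃ * (Φ₁₃ᵀ * (Φ₁₃ * Φ₂₃ᵀ)) := by
            rw [← Matrix.mul_assoc Φ₁₂ Φ₁₂ᵀ, h₁₂', Matrix.one_mul]
        _ = Φ₂₃ * Φ₂₃ᵀ := by rw [← Matrix.mul_assoc Φ₁₃ᵀ Φ₁₃, h₁₃, Matrix.one_mul]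
        _ = 1 := h₂₃'
    rw [hRdet]
    exact det_clamp _ hWo c (α₁₂ * α₁₃ * α₂₃) hcw
  · intro hone
    have e1 : Φ₁₂ * Φ₂₃ = Φ₁₃ := by
      calc Φ₁₂ * Φ₂₃ = Φ₁₃ * Φ₁₃ᵀ * Φ₁₂ * Φ₂₃ := by rw [h₁₃', Matrix.one_mul]
        _ = Φ₁₃ * (Φ₁₃ᵀ * Φ₁₂ * Φ₂₃) := by simp only [Matrix.mul_assoc]
        _ = Φ₁₃ := by rw [hone, Matrix.mul_one]
    have e2 : Φ₁₂ᵀ * Φ₁₃ = Φ₂₃ := by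
      rw [← e1, ← Matrix.mul_assoc, h₁₂, Matrix.one_mul]
    have hΨ : Φ₁₂ᵀ * Φ₁₃ * Φ₂₃ᵀ = 1 := by rw [e2, h₂₃']
    rw [hRdet, hΨ, Matrix.transpose_one]
    have hmat : (c • (1 : Matrix (Fin T) (Fin T) ℝ) +
        (α₁₂ * α₁₃ * α₂₃) • ((1 : Matrix (Fin T) (Fin T) ℝ) + 1)) =
        (c + 2 * (α₁₂ * α₁₃ * α₂₃)) • 1 := by module
    rw [hmat, Matrix.det_smul, Matrix.det_one, Fintype.card_fin, mul_one]
  · intro hone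
    have e1 : Φ₁₂ * Φ₂₃ = -Φ₁₃ := by
      calc Φ₁₂ * Φ₂₃ = Φ₁₃ * Φ₁₃ᵀ * Φ₁₂ * Φ₂₃ := by rw [h₁₃', Matrix.one_mul]
        _ = Φ₁₃ * (Φ₁₃ᵀ * Φ₁₂ * Φ₂₃) := by simp only [Matrix.mul_assoc]
        _ = -Φ₁₃ := by rw [hone, Matrix.mul_neg, Matrix.mul_one]
    have e2 : Φ₁₂ᵀ * Φ₁₃ = -Φ₂₃ := by
      have h5 : Φ₂₃ = -(Φ₁₂ᵀ * Φ₁₃) := by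
        rw [← Matrix.one_mul Φ₂₃, ← h₁₂, Matrix.mul_assoc, e1, Matrix.mul_neg]
      rw [h5, neg_neg]
    have hΨ : Φ₁₂ᵀ * Φ₁₃ * Φ₂₃ᵀ = -1 := by rw [e2, Matrix.neg_mul, h₂₃']
    rw [hRdet, hΨ]
    have htn : (-1 : Matrix (Fin T) (Fin T) ℝ)ᵀ = -1 := by
      rw [Matrix.transpose_neg, Matrix.transpose_one]
    rw [htn]
    have hmat : (c • (1 : Matrix (Fin T) (Fin T) ℝ) +
        (α₁₂ * α₁₃ * α₂₃) • (-(1 : Matrix (Fin T) (Fin T) ℝ) + -1)) =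
        (c - 2 * (α₁₂ * α₁₃ * α₂₃)) • 1 := by module
    rw [hmat, Matrix.det_smul, Matrix.det_one, Fintype.card_fin, mul_one]
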